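/- If C is a generating set of the ℤ-module of ℤ-flows of G, then the image of C under reduction modulo q generates the ℤ_q-module of ℤ_q-flows of G, for every positive integer q. -/

import Mathlib

open Finset

noncomputable section

attribute [local instance] Classical.propDecidable

/-- A finite multigraph with a fixed orientation: each edge has a source and a target. -/
structure Multigraph (V E : Type) where
  src : E → V
  tgt : E → V

namespace Multigraph

variable {V E : Type} [Fintype V] [Fintype E] [DecidableEq V] [DecidableEq E]

/-- A `ℤ_q`-flow: conservation at every vertex. -/
def IsFlow (G : Multigraph V E) (q : ℕ) (f : E → ZMod q) : Prop :=
  ∀ v : V, ∑ e ∈ univ.filter (fun e => G.tgt e = v), f e =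
           ∑ e ∈ univ.filter (fun e => G.src e = v), f e

/-- A `ℤ`-flow: conservation at every vertex. -/
def IsZFlow (G : Multigraph V E) (f : E → ℤ) : Prop :=
  ∀ v : V, ∑ e ∈ univ.filter (fun e => G.tgt e = v), f e =
           ∑ e ∈ univ.filter (fun e => G.src e = v), f e

/-- The support of a flow: the set of edges with nonzero value. -/
def flowSupport {q : ℕ} (f : E → ZMod q) : Finset E :=
  univ.filter (fun e => f e ≠ 0)

/-- Flow partition function (complex variable). -/
def Zflow (G : Multigraph V E) (q : ℕ) [NeZero q] (x : ℂ) : ℂ :=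
  ∑ f ∈ univ.filter (fun f : E → ZMod q => G.IsFlow q f), x ^ (flowSupport f).card

/-- Flow partition function (real variable). -/
def ZflowR (G : Multigraph V E) (q : ℕ) [NeZero q] (x : ℝ) : ℝ :=
  ∑ f ∈ univ.filter (fun f : E → ZMod q => G.IsFlow q f), x ^ (flowSupport f).card

/-- Potts partition function: sum over colourings of `w ^ (number of monochromatic edges)`. -/
def ZPotts (G : Multigraph V E) (q : ℕ) (w : ℂ) : ℂ :=
  ∑ σ : V → Fin q, w ^ (univ.filter (fun e => σ (G.src e) = σ (G.tgt e))).card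

/-- The simple graph on `V` induced by the edges in `F` (loops/multiplicities dropped;
this does not change connected components). -/
def compRel (G : Multigraph V E) (F : Finset E) : SimpleGraph V :=
  SimpleGraph.fromRel (fun v w => ∃ e ∈ F, G.src e = v ∧ G.tgt e = w)

/-- Number of connected components of the spanning subgraph `(V, F)`. -/
def compCount (G : Multigraph V E) (F : Finset E) : ℕ :=
  Nat.card (G.compRel F).ConnectedComponent

/-- Random cluster partition function. -/
def ZRC (G : Multigraph V E) (q : ℕ) (y : ℂ) : ℂ :=
  ∑ F : Finset E, (q : ℂ) ^ (G.compCount F) * y ^ F.card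

/-- The spanning subgraph `(V, A)`. -/
def edgeSubgraph (G : Multigraph V E) (A : Finset E) : Multigraph V {e : E // e ∈ A} :=
  ⟨fun e => G.src e.1, fun e => G.tgt e.1⟩

/-- Deletion of the edge `e`. -/
def deleteEdge (G : Multigraph V E) (e : E) : Multigraph V {e' : E // e' ≠ e} :=
  ⟨fun e' => G.src e'.1, fun e' => G.tgt e'.1⟩

/-- Contraction of the edge `e`: the edge `e` is removed and every endpoint equal to
`G.tgt e` is redirected to `G.src e`, merging the two endpoints of `e`. -/
def contractEdge (G : Multigraph V E) (e : E) : Multigraph V {e' : E // e' ≠ e} :=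
  ⟨fun e' => if G.src e'.1 = G.tgt e then G.src e else G.src e'.1,
   fun e' => if G.tgt e'.1 = G.tgt e then G.src e else G.tgt e'.1⟩

end Multigraph

/-- The `(L+1) × (L+1)` grid graph, with horizontal and vertical edges oriented
in the positive direction. -/
def gridGraph (L : ℕ) :
    Multigraph (Fin (L+1) × Fin (L+1)) ((Fin L × Fin (L+1)) ⊕ (Fin (L+1) × Fin L)) :=
  ⟨Sum.elim (fun p => (p.1.castSucc, p.2)) (fun p => (p.1, p.2.castSucc)),
   Sum.elim (fun p => (p.1.succ, p.2)) (fun p => (p.1, p.2.succ))⟩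

/-!
Lift a `ℤ_q`-flow `f` edgewise to an integer vector `f₀`; its divergence vanishes mod `q`,
so it equals `q • w`. The divergences are exactly the vertex functions summing to zero over
every connected component, hence `q • w` being one forces `w = div k` to be one as well,
and `f₀ - q • k` is a `ℤ`-flow reducing to `f`. Expanding it in the generators and reducing
mod `q` expresses `f` in their reductions.
-/

namespace Multigraph

variable {V E : Type} {M : Type*} [AddCommGroup M] (G : Multigraph V E)

def Linked (u v : V) : Prop := ∃ e, G.src e = u ∧ G.tgt e = v

def component (v : V) : Quot G.Linked := Quot.mk _ v

lemma component_src (e : E) : G.component (G.src e) = G.component (G.tgt e) :=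
  Quot.sound ⟨e, rfl, rfl⟩

lemma sum_single_out_component_eq_zero [Fintype V] [DecidableEq V] (w : V → M)
    (hw : ∀ c, ∑ v with G.component v = c, w v = 0) :
    ∑ v, (Pi.single (G.component v).out (w v) : V → M) = 0 := by
  have := Fintype.ofFinite (Quot G.Linked)
  rw [← sum_fiberwise univ G.component]
  refine sum_eq_zero fun c _ => ?_
  calc ∑ v with G.component v = c, (Pi.single (G.component v).out (w v) : V → M)
      = ∑ v with G.component v = c, Pi.single c.out (w v) :=
        sum_congr rfl fun v hv => by rw [(mem_filter.1 hv).2]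
    _ = Pi.single c.out (∑ v with G.component v = c, w v) :=
        (map_sum (AddMonoidHom.single (fun _ : V => M) c.out) _ _).symm
    _ = 0 := by rw [hw c, Pi.single_zero]

variable [Fintype E] [DecidableEq V]

def divergence : (E → M) →+ (V → M) :=
  AddMonoidHom.mk' (fun g v => ∑ e with G.tgt e = v, g e - ∑ e with G.src e = v, g e)
    fun g h => by
      funext v
      simp only [Pi.add_apply, sum_add_distrib]
      abel

lemma divergence_apply (g : E → M) (v : V) :
    G.divergence g v = ∑ e with G.tgt e = v, g e - ∑ e with G.src e = v, g e :=
  rfl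

lemma isFlow_iff_divergence_eq_zero {q : ℕ} [DecidableEq E] (f : E → ZMod q) :
    G.IsFlow q f ↔ G.divergence f = 0 := by
  simp only [IsFlow, funext_iff, divergence_apply, Pi.zero_apply, sub_eq_zero]

lemma isZFlow_iff_divergence_eq_zero [DecidableEq E] (g : E → ℤ) :
    G.IsZFlow g ↔ G.divergence g = 0 := by
  simp only [IsZFlow, funext_iff, divergence_apply, Pi.zero_apply, sub_eq_zero]

lemma divergence_comp {N : Type*} [AddCommGroup N] (φ : M →+ N) (g : E → M) :
    G.divergence (φ ∘ g) = φ ∘ G.divergence g := by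
  funext v
  simp [divergence_apply, map_sum]

lemma divergence_single [DecidableEq E] (e : E) (m : M) :
    G.divergence (Pi.single e m) = Pi.single (G.tgt e) m - Pi.single (G.src e) m := by
  funext v
  simp [divergence_apply, Pi.single_apply, eq_comm]

lemma sum_divergence_eq_zero_of_forall_iff [Fintype V] (P : V → Prop) [DecidablePred P]
    (hP : ∀ e, P (G.src e) ↔ P (G.tgt e)) (g : E → M) :
    ∑ v with P v, G.divergence g v = 0 := by
  simp only [divergence_apply, sum_sub_distrib, sum_fiberwise_eq_sum_filter, mem_filter,
    mem_univ, true_and, hP, sub_self]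

lemma single_sub_single_mem_range_divergence [DecidableEq E] {u v : V}
    (h : Relation.EqvGen G.Linked u v) (m : M) :
    (Pi.single u m - Pi.single v m : V → M) ∈ G.divergence.range := by
  induction h with
  | rel a b hab =>
    obtain ⟨e, rfl, rfl⟩ := hab
    refine ⟨Pi.single e (-m), ?_⟩
    rw [divergence_single, Pi.single_neg, Pi.single_neg, neg_sub_neg]
  | refl a => simp
  | symm a b _ ih => simpa using neg_mem ih
  | trans a b c _ _ ih₁ ih₂ => simpa using add_mem ih₁ ih₂

lemma mem_range_divergence_iff [Fintype V] [DecidableEq E] (w : V → M) :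
    w ∈ G.divergence.range ↔ ∀ c, ∑ v with G.component v = c, w v = 0 := by
  constructor
  · rintro ⟨g, rfl⟩ c
    exact G.sum_divergence_eq_zero_of_forall_iff _ (fun e => by rw [component_src]) g
  · intro hw
    have : w = ∑ v, (Pi.single v (w v) - Pi.single (G.component v).out (w v)) := by
      rw [sum_sub_distrib, G.sum_single_out_component_eq_zero w hw, sub_zero,
        univ_sum_single]
    rw [this]
    refine sum_mem fun v _ => G.single_sub_single_mem_range_divergence ?_ _
    exact Quot.eqvGen_exact (Quot.out_eq _).symm

lemma mem_range_divergence_of_zsmul_mem [Fintype V] [DecidableEq E] [IsAddTorsionFree M]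
    {n : ℤ} (hn : n ≠ 0) {w : V → M} (h : n • w ∈ G.divergence.range) :
    w ∈ G.divergence.range := by
  rw [mem_range_divergence_iff] at h ⊢
  intro c
  have hc := h c
  simp only [Pi.smul_apply, ← smul_sum] at hc
  exact (IsAddTorsionFree.zsmul_eq_zero_iff_right hn).1 hc

lemma exists_isZFlow_intCast_eq [Fintype V] [DecidableEq E] {q : ℕ} {f : E → ZMod q}
    (hf : G.IsFlow q f) : ∃ g : E → ℤ, G.IsZFlow g ∧ ∀ e, (g e : ZMod q) = f e := by
  set f₀ : E → ℤ := fun e => (f e).cast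
  have hf₀ : ∀ e, (f₀ e : ZMod q) = f e := fun e => ZMod.intCast_zmod_cast (f e)
  have hdvd : ∀ v, (q : ℤ) ∣ G.divergence f₀ v := by
    intro v
    have h := congrFun (G.divergence_comp (Int.castAddHom (ZMod q)) f₀) v
    rw [show Int.castAddHom (ZMod q) ∘ f₀ = f from funext hf₀,
      (G.isFlow_iff_divergence_eq_zero f).1 hf] at h
    rw [← ZMod.intCast_zmod_eq_zero_iff_dvd]
    simpa using h.symm
  choose w hw using hdvd
  replace hw : G.divergence f₀ = (q : ℤ) • w := funext hw
  obtain ⟨k, hk⟩ : ∃ k, G.divergence f₀ = (q : ℤ) • G.divergence k := by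
    rcases eq_or_ne q 0 with rfl | hq
    · exact ⟨0, by simp [hw]⟩
    · obtain ⟨k, hk⟩ :=
        G.mem_range_divergence_of_zsmul_mem (Int.natCast_ne_zero.2 hq) ⟨f₀, hw⟩
      exact ⟨k, by rw [hw, hk]⟩
  refine ⟨f₀ - (q : ℤ) • k, ?_, fun e => by simp [hf₀]⟩
  rw [isZFlow_iff_divergence_eq_zero, map_sub, map_zsmul, hk, sub_self]

end Multigraph

theorem generating_set_reduction_general {V E : Type} [Fintype V] [Fintype E] [DecidableEq V] [DecidableEq E]
    (G : Multigraph V E) (r : ℕ) (C : Fin r → (E → ℤ))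
    (hgen : ∀ f : E → ℤ, G.IsZFlow f → ∃ c : Fin r → ℤ, f = ∑ i, c i • C i)
    (q : ℕ) :
    ∀ f : E → ZMod q, G.IsFlow q f →
      ∃ c : Fin r → ZMod q, f = ∑ i, c i • (fun e => ((C i e : ZMod q))) := by
  intro f hf
  obtain ⟨g, hg, hgf⟩ := G.exists_isZFlow_intCast_eq hf
  obtain ⟨c, rfl⟩ := hgen g hg
  refine ⟨fun i => (c i : ZMod q), funext fun e => ?_⟩
  rw [← hgf e]
  simp

theorem generating_set_reduction {V E : Type} [Fintype V] [Fintype E] [DecidableEq V] [DecidableEq E]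
    (G : Multigraph V E) (r : ℕ) (C : Fin r → (E → ℤ))
    (hCflow : ∀ i, G.IsZFlow (C i))
    (hgen : ∀ f : E → ℤ, G.IsZFlow f → ∃ c : Fin r → ℤ, f = ∑ i, c i • C i)
    (q : ℕ) (hq : 0 < q) :
    ∀ f : E → ZMod q, G.IsFlow q f →
      ∃ c : Fin r → ZMod q, f = ∑ i, c i • (fun e => ((C i e : ZMod q))) :=
  generating_set_reduction_general G r C hgen q
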